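/- Let X_1, ..., X_m be (not necessarily independent) nonnegative real random variables such that P(X_i > x) < β·e^{-αx} for all i and all x > 0, where α, β > 0. Then for every ε > 0 there exists β' = 1 + β/ε such that the average X̄ = (1/m)·Σ X_i satisfies P(X̄ > x) < β'·e^{-αx/(1+ε)} for every x > 0. -/

import Mathlib

/-!
The `X i` need not be measurable, so each is first replaced by a measurable majorant with the same
tail bounds (built from measurable hulls of its superlevel sets at a countable dense set of
levels), truncated at `m x` to make it real-valued; the truncation does not shrink the event
`x < X̄`. With `s = α / (1 + ε)`, the layer-cake formula and the strict tail bound give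
`E[exp (s Y)] < 1 + β s / (α - s) = 1 + β / ε` for each majorant `Y`. Convexity of `exp` bounds
`E[exp (s Ȳ)]` by the average of these, and Markov's inequality for `exp (s Ȳ)` concludes.
-/

open MeasureTheory Real Set
open scoped ENNReal

section

variable {Ω : Type*} [MeasurableSpace Ω] (μ : Measure Ω)

theorem exists_measurable_ge_measure_lt_le (f : Ω → ℝ≥0∞) :
    ∃ g : Ω → ℝ≥0∞, Measurable g ∧ f ≤ g ∧ ∀ t, μ {ω | t < g ω} ≤ μ {ω | t < f ω} := by
  obtain ⟨D, hDc, hD⟩ := TopologicalSpace.exists_countable_dense ℝ≥0∞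
  have : Countable D := hDc.to_subtype
  -- `B d` is a measurable hull of `{d < f}`, made antitone in `d` so that the hulls at
  -- levels above `t` form a directed family
  set B : D → Set Ω := fun d =>
    ⋂ (e : D) (_ : (e : ℝ≥0∞) ≤ d), toMeasurable μ {ω | (e : ℝ≥0∞) < f ω}
  have hB_meas (d : D) : MeasurableSet (B d) :=
    .iInter fun e => .iInter fun _ => measurableSet_toMeasurable _ _
  have hB_anti {d d' : D} (h : (d : ℝ≥0∞) ≤ d') : B d' ⊆ B d :=
    fun ω hω => mem_iInter₂.2 fun e he => mem_iInter₂.1 hω e (he.trans h)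
  have hB_sub (d : D) {ω : Ω} (h : (d : ℝ≥0∞) < f ω) : ω ∈ B d :=
    mem_iInter₂.2 fun e he => subset_toMeasurable _ _ (he.trans_lt h)
  refine ⟨fun ω => ⨆ d : D, (B d).indicator (fun _ => (d : ℝ≥0∞)) ω,
    .iSup fun d => measurable_const.indicator (hB_meas d), fun ω => ?_, fun t => ?_⟩
  · refine le_of_forall_lt fun c hc => ?_
    obtain ⟨d, hdD, hcd, hdf⟩ := hD.exists_between hc
    exact hcd.trans_le <| le_iSup_of_le ⟨d, hdD⟩ <| by
      rw [indicator_of_mem (hB_sub ⟨d, hdD⟩ hdf)]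
  · have hsub : {ω | t < ⨆ d : D, (B d).indicator (fun _ => (d : ℝ≥0∞)) ω} ⊆
        ⋃ d : {d : D // t < d}, B d := by
      intro ω hω
      obtain ⟨d, hd⟩ := lt_iSup_iff.1 (show t < _ from hω)
      by_cases hmem : ω ∈ B d
      · rw [indicator_of_mem hmem] at hd
        exact mem_iUnion.2 ⟨⟨d, hd⟩, hmem⟩
      · simp [indicator_of_notMem hmem] at hd
    have hdir : Directed (· ⊆ ·) fun d : {d : D // t < d} => B d := fun d d' =>
      (le_total (d : ℝ≥0∞) d').elim (fun h => ⟨d, le_rfl, hB_anti h⟩)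
        (fun h => ⟨d', hB_anti h, le_rfl⟩)
    calc _ ≤ μ (⋃ d : {d : D // t < d}, B d) := measure_mono hsub
      _ = ⨆ d : {d : D // t < d}, μ (B d) := hdir.measure_iUnion
      _ ≤ μ {ω | t < f ω} := iSup_le fun d => calc
          μ (B d) ≤ μ (toMeasurable μ {ω | ((d : D) : ℝ≥0∞) < f ω}) :=
            measure_mono fun ω hω => mem_iInter₂.1 hω d le_rfl
          _ = μ {ω | ((d : D) : ℝ≥0∞) < f ω} := measure_toMeasurable _
          _ ≤ μ {ω | t < f ω} := measure_mono fun ω hω => d.2.trans hω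

theorem exists_measurable_nonneg_min_le_measure_lt_le (f : Ω → ℝ) (T : ℝ) :
    ∃ Y : Ω → ℝ, Measurable Y ∧ 0 ≤ Y ∧ (∀ ω, min (f ω) T ≤ Y ω) ∧
      ∀ t, 0 ≤ t → μ {ω | t < Y ω} ≤ μ {ω | t < f ω} := by
  obtain ⟨g, hg, hfg, hg_tail⟩ :=
    exists_measurable_ge_measure_lt_le μ fun ω => ENNReal.ofReal (f ω)
  have hfin (ω : Ω) : min (g ω) (ENNReal.ofReal T) ≠ ∞ :=
    (min_le_right _ _).trans_lt ENNReal.ofReal_lt_top |>.ne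
  refine ⟨fun ω => (min (g ω) (ENNReal.ofReal T)).toReal,
    (hg.min measurable_const).ennreal_toReal, fun ω => ENNReal.toReal_nonneg, fun ω => ?_,
    fun t ht => ?_⟩
  · calc min (f ω) T ≤ (ENNReal.ofReal (min (f ω) T)).toReal := le_max_left _ _
      _ ≤ _ := ENNReal.toReal_mono (hfin ω) <| by
        rw [ENNReal.ofReal_min]
        exact min_le_min_right _ (hfg ω)
  · calc μ {ω | t < (min (g ω) (ENNReal.ofReal T)).toReal}
        ≤ μ {ω | ENNReal.ofReal t < g ω} := measure_mono fun ω hω =>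
          ((ENNReal.ofReal_lt_iff_lt_toReal ht (hfin ω)).2 hω).trans_le (min_le_left _ _)
      _ ≤ μ {ω | ENNReal.ofReal t < ENNReal.ofReal (f ω)} := hg_tail _
      _ = μ {ω | t < f ω} := by simp_rw [ENNReal.ofReal_lt_ofReal_iff_of_nonneg ht]

theorem le_avg_of_min_le {ι : Type*} [Fintype ι] {a b : ι → ℝ} {x : ℝ} (hb : 0 ≤ b)
    (hab : ∀ i, min (a i) (Fintype.card ι * x) ≤ b i)
    (hx : x < (1 / Fintype.card ι : ℝ) * ∑ i, a i) :
    x ≤ (1 / Fintype.card ι : ℝ) * ∑ i, b i := by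
  by_cases hsmall : ∀ i, a i ≤ Fintype.card ι * x
  · refine hx.le.trans <|
      mul_le_mul_of_nonneg_left (Finset.sum_le_sum fun i _ => ?_) (by positivity)
    simpa [min_eq_left (hsmall i)] using hab i
  · obtain ⟨j, hj⟩ := not_forall.1 hsmall
    replace hj := not_le.1 hj
    have hcard : (0 : ℝ) < Fintype.card ι := by
      have : Nonempty ι := ⟨j⟩
      exact_mod_cast Fintype.card_pos
    calc x = (1 / Fintype.card ι : ℝ) * (Fintype.card ι * x) := by field_simp
      _ ≤ (1 / Fintype.card ι : ℝ) * ∑ i, b i := by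
        gcongr
        calc (Fintype.card ι : ℝ) * x = min (a j) (Fintype.card ι * x) :=
              (min_eq_right hj.le).symm
          _ ≤ b j := hab j
          _ ≤ ∑ i, b i := Finset.single_le_sum (fun i _ => hb i) (Finset.mem_univ j)

theorem intervalIntegral_mul_exp_mul (s y : ℝ) :
    ∫ t in (0 : ℝ)..y, s * exp (s * t) = exp (s * y) - 1 := by
  rw [intervalIntegral.integral_eq_sub_of_hasDerivAt (f := fun t => exp (s * t))
    (fun t _ => by simpa [mul_comm] using ((hasDerivAt_id t).const_mul s).exp)
    ((by fun_prop : Continuous fun t => s * exp (s * t)).intervalIntegrable _ _), mul_zero,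
    exp_zero]

theorem lintegral_Ioi_mul_exp_mul {α β s : ℝ} (hβ : 0 ≤ β) (hs : 0 ≤ s) (hsα : s < α) :
    ∫⁻ t in Ioi (0 : ℝ), ENNReal.ofReal (β * exp (-α * t)) * ENNReal.ofReal (s * exp (s * t)) =
      ENNReal.ofReal (β * s / (α - s)) := by
  have hα : s - α < 0 := by linarith
  have hmul (t : ℝ) : β * exp (-α * t) * (s * exp (s * t)) = β * s * exp ((s - α) * t) := by
    rw [show (s - α) * t = -α * t + s * t by ring, exp_add]; ring
  simp_rw [← ENNReal.ofReal_mul (by positivity : 0 ≤ β * exp _), hmul]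
  rw [← ofReal_integral_eq_lintegral_ofReal ((integrableOn_exp_mul_Ioi hα 0).const_mul _)
    (.of_forall fun t => by positivity), integral_const_mul, integral_exp_mul_Ioi hα,
    mul_zero, exp_zero]
  congr 1
  rw [neg_div, ← div_neg, neg_sub, mul_one_div]

theorem lintegral_exp_mul_lt_of_measure_lt [IsProbabilityMeasure μ] {Y : Ω → ℝ}
    (hY : AEMeasurable Y μ) (hY0 : 0 ≤ Y)
    {α β s : ℝ} (hβ : 0 ≤ β) (hs : 0 < s) (hsα : s < α)
    (htail : ∀ t, 0 < t → μ {ω | t < Y ω} < ENNReal.ofReal (β * exp (-α * t))) :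
    ∫⁻ ω, ENNReal.ofReal (exp (s * Y ω)) ∂μ < 1 + ENNReal.ofReal (β * s / (α - s)) := by
  have hsplit (ω : Ω) : ENNReal.ofReal (exp (s * Y ω)) =
      1 + ENNReal.ofReal (∫ t in (0 : ℝ)..Y ω, s * exp (s * t)) := by
    rw [intervalIntegral_mul_exp_mul, ← ENNReal.ofReal_one,
      ← ENNReal.ofReal_add zero_le_one (sub_nonneg.2 (one_le_exp (mul_nonneg hs.le (hY0 ω)))),
      add_sub_cancel]
  have hlayer := lintegral_comp_eq_lintegral_meas_lt_mul μ (.of_forall hY0) hY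
    (fun t _ => (by fun_prop : Continuous fun t => s * exp (s * t)).intervalIntegrable _ _)
    (.of_forall fun t => by positivity)
  have hmeas : Measurable fun t : ℝ =>
      ENNReal.ofReal (β * exp (-α * t)) * ENNReal.ofReal (s * exp (s * t)) := by fun_prop
  simp_rw [hsplit]
  rw [lintegral_add_left measurable_const, lintegral_const, measure_univ, mul_one, hlayer,
    ← lintegral_Ioi_mul_exp_mul hβ hs.le hsα]
  refine ENNReal.add_lt_add_left ENNReal.one_ne_top ?_
  have hpos (t : ℝ) : ENNReal.ofReal (s * exp (s * t)) ≠ 0 := by positivity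
  refine setLIntegral_strict_mono (μ := volume) measurableSet_Ioi (by simp) hmeas ?_
    (.of_forall fun t ht => ENNReal.mul_lt_mul_left (hpos t) ENNReal.ofReal_ne_top (htail t ht))
  refine ne_top_of_le_ne_top ?_
    (setLIntegral_mono hmeas fun t ht => mul_le_mul_left (htail t ht).le _)
  rw [lintegral_Ioi_mul_exp_mul hβ hs.le hsα]
  exact ENNReal.ofReal_ne_top

theorem measure_le_le_exp_mul_lintegral_exp {Z : Ω → ℝ} (hZ : AEMeasurable Z μ) {s : ℝ}
    (hs : 0 ≤ s) (x : ℝ) :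
    μ {ω | x ≤ Z ω} ≤
      ENNReal.ofReal (exp (-(s * x))) * ∫⁻ ω, ENNReal.ofReal (exp (s * Z ω)) ∂μ := by
  calc μ {ω | x ≤ Z ω}
      ≤ μ {ω | ENNReal.ofReal (exp (s * x)) ≤ ENNReal.ofReal (exp (s * Z ω))} :=
        measure_mono fun ω hω => ENNReal.ofReal_le_ofReal (exp_le_exp.2 (by gcongr; exact hω))
    _ ≤ (∫⁻ ω, ENNReal.ofReal (exp (s * Z ω)) ∂μ) / ENNReal.ofReal (exp (s * x)) :=
        meas_ge_le_lintegral_div (hZ.const_mul s).exp.ennreal_ofReal (by positivity)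
          ENNReal.ofReal_ne_top
    _ = _ := by
        rw [div_eq_mul_inv, mul_comm, ← ENNReal.ofReal_inv_of_pos (exp_pos _), exp_neg]

theorem exp_mul_avg_le {ι : Type*} [Fintype ι] [Nonempty ι] (s : ℝ) (y : ι → ℝ) :
    ENNReal.ofReal (exp (s * ((1 / Fintype.card ι : ℝ) * ∑ i, y i))) ≤
      (Fintype.card ι : ℝ≥0∞)⁻¹ * ∑ i, ENNReal.ofReal (exp (s * y i)) := by
  have hcard : (0 : ℝ) < Fintype.card ι := by exact_mod_cast Fintype.card_pos
  have hjensen := convexOn_exp.map_sum_le (t := Finset.univ)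
    (w := fun _ => 1 / (Fintype.card ι : ℝ)) (p := fun i => s * y i) (fun _ _ => by positivity)
    (by simp [hcard.ne']) (fun _ _ => mem_univ _)
  rw [← ENNReal.ofReal_natCast, ← ENNReal.ofReal_inv_of_pos hcard,
    ← ENNReal.ofReal_sum_of_nonneg (fun _ _ => (exp_pos _).le),
    ← ENNReal.ofReal_mul (by positivity)]
  refine ENNReal.ofReal_le_ofReal ?_
  simpa only [smul_eq_mul, Finset.mul_sum, mul_left_comm s, one_div] using hjensen

theorem lintegral_exp_mul_avg_lt {ι : Type*} [Fintype ι] [Nonempty ι] {Y : ι → Ω → ℝ}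
    (hY : ∀ i, AEMeasurable (Y i) μ) {s : ℝ} {C : ℝ≥0∞}
    (hC : ∀ i, ∫⁻ ω, ENNReal.ofReal (exp (s * Y i ω)) ∂μ < C) :
    ∫⁻ ω, ENNReal.ofReal (exp (s * ((1 / Fintype.card ι : ℝ) * ∑ i, Y i ω))) ∂μ < C := by
  have hcard : (Fintype.card ι : ℝ≥0∞) ≠ 0 := by simp
  calc _ ≤ ∫⁻ ω, (Fintype.card ι : ℝ≥0∞)⁻¹ * ∑ i, ENNReal.ofReal (exp (s * Y i ω)) ∂μ :=
        lintegral_mono fun ω => exp_mul_avg_le s _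
    _ = (Fintype.card ι : ℝ≥0∞)⁻¹ * ∑ i, ∫⁻ ω, ENNReal.ofReal (exp (s * Y i ω)) ∂μ := by
        rw [lintegral_const_mul' _ _ (by simp), lintegral_finsetSum' _ fun i _ =>
          ((hY i).const_mul s).exp.ennreal_ofReal]
    _ < (Fintype.card ι : ℝ≥0∞)⁻¹ * ∑ _i : ι, C :=
        ENNReal.mul_lt_mul_right (by simp) (by simp)
          (ENNReal.sum_lt_sum_of_nonempty Finset.univ_nonempty fun i _ => hC i)
    _ = C := by
        rw [Finset.sum_const, Finset.card_univ, nsmul_eq_mul,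
          ENNReal.inv_mul_cancel_left hcard (ENNReal.natCast_ne_top _)]

end

theorem avg_exp_decay_general {Ω : Type*} [MeasurableSpace Ω] (μ : Measure Ω) [IsProbabilityMeasure μ]
    (m : ℕ) (hm : 0 < m) (α β : ℝ) (hα : 0 < α) (hβ : 0 < β)
    (X : Fin m → Ω → ℝ)
    (htail : ∀ i, ∀ x : ℝ, 0 < x → μ {ω | x < X i ω} < ENNReal.ofReal (β * Real.exp (-α * x)))
    (ε : ℝ) (hε : 0 < ε) :
    ∀ x : ℝ, 0 < x →
      μ {ω | x < (1 / m : ℝ) * ∑ i, X i ω} <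
        ENNReal.ofReal ((1 + β / ε) * Real.exp (-(α * x) / (1 + ε))) := by
  intro x hx
  have : Nonempty (Fin m) := ⟨⟨0, hm⟩⟩
  set s := α / (1 + ε) with hs_def
  have hs : 0 < s := by positivity
  have hsα : s < α := div_lt_self hα (by linarith)
  choose Y hY hY0 hXY hYtail using
    fun i => exists_measurable_nonneg_min_le_measure_lt_le μ (X i) (m * x)
  have hmgf (i : Fin m) : ∫⁻ ω, ENNReal.ofReal (exp (s * Y i ω)) ∂μ <
      1 + ENNReal.ofReal (β * s / (α - s)) :=
    lintegral_exp_mul_lt_of_measure_lt μ (hY i).aemeasurable (hY0 i) hβ.le hs hsα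
      fun t ht => (hYtail i t ht.le).trans_lt (htail i t ht)
  have hconst : ENNReal.ofReal (exp (-(s * x))) * (1 + ENNReal.ofReal (β * s / (α - s))) =
      ENNReal.ofReal ((1 + β / ε) * exp (-(α * x) / (1 + ε))) := by
    rw [← ENNReal.ofReal_one, ← ENNReal.ofReal_add zero_le_one (by positivity),
      ← ENNReal.ofReal_mul (exp_pos _).le, mul_comm]
    congr 3
    · rw [div_eq_div_iff (by linarith) hε.ne', hs_def]; field_simp; ring
    · rw [hs_def]; ring
  calc μ {ω | x < (1 / m : ℝ) * ∑ i, X i ω}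
      ≤ μ {ω | x ≤ (1 / m : ℝ) * ∑ i, Y i ω} :=
        measure_mono fun ω (hω : x < _) => show x ≤ _ by
          simpa only [Fintype.card_fin] using le_avg_of_min_le (fun i => hY0 i ω)
            (by simpa only [Fintype.card_fin] using fun i => hXY i ω) (by rwa [Fintype.card_fin])
    _ ≤ ENNReal.ofReal (exp (-(s * x))) *
        ∫⁻ ω, ENNReal.ofReal (exp (s * ((1 / m : ℝ) * ∑ i, Y i ω))) ∂μ :=
      measure_le_le_exp_mul_lintegral_exp μ (by fun_prop) hs.le x
    _ < ENNReal.ofReal (exp (-(s * x))) * (1 + ENNReal.ofReal (β * s / (α - s))) := by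
      refine ENNReal.mul_lt_mul_right (by positivity) ENNReal.ofReal_ne_top ?_
      simpa only [Fintype.card_fin] using
        lintegral_exp_mul_avg_lt μ (fun i => (hY i).aemeasurable) hmgf
    _ = _ := hconst

/-- Average of (not necessarily independent) nonnegative random variables with
exponentially decaying tails has an exponentially decaying tail. -/
theorem avg_exp_decay {Ω : Type*} [MeasurableSpace Ω] (μ : Measure Ω) [IsProbabilityMeasure μ]
    (m : ℕ) (hm : 0 < m) (α β : ℝ) (hα : 0 < α) (hβ : 0 < β)
    (X : Fin m → Ω → ℝ) (hX0 : ∀ i ω, 0 ≤ X i ω)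
    (htail : ∀ i, ∀ x : ℝ, 0 < x → μ {ω | x < X i ω} < ENNReal.ofReal (β * Real.exp (-α * x)))
    (ε : ℝ) (hε : 0 < ε) :
    ∀ x : ℝ, 0 < x →
      μ {ω | x < (1 / m : ℝ) * ∑ i, X i ω} <
        ENNReal.ofReal ((1 + β / ε) * Real.exp (-(α * x) / (1 + ε))) :=
  avg_exp_decay_general μ m hm α β hα hβ X htail ε hε
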